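/- Let n ≥ 2, B ⊂ ℝ^n the open unit ball, and u : B → ℝ, u(x) = −√(1 − |x|), whose gradient at x ≠ 0 is ∇u(x) = x/(2|x|√(1−|x|)). Then ∫_B F_1^*(x, ∇u(x))² dx = (1/4)∫_B (1 − |x|) dx = ω_n/(4(n+1)), and ∫_B u(x)² dx = ω_n/(n+1), where ω_n is the Lebesgue volume of B. -/

import Mathlib

/-!
The radial function `u(x) = -√(1 - |x|)` has gradient `x / (2|x|√(1 - |x|))`, a positive multiple
of `x`. For `y = c x` with `c ≥ 0` one has `F_1^*(x, y) = c|x|(1 - |x|)`, so off the null set `{0}`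
the integrand `F_1^*(x, ∇u)²` equals `(1 - |x|)/4`, while `u² = 1 - |x|`. Both integrals thus reduce
to `∫_B (1 - |x|) dx`, which polar coordinates turn into
`n ω_n ∫₀¹ r^(n-1)(1 - r) dr = ω_n/(n+1)`.
-/

open Metric MeasureTheory

/-- The polar transform of the Funk metric: `F_1^*(x,y) = |y| - ⟨x,y⟩`. -/
noncomputable def F1Star (n : ℕ) (x y : EuclideanSpace ℝ (Fin n)) : ℝ :=
  ‖y‖ - (inner ℝ x y : ℝ)

open Set

section Radial

variable {E : Type*} [NormedAddCommGroup E] [InnerProductSpace ℝ E]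

theorem hasFDerivAt_norm {x : E} (hx : x ≠ 0) :
    HasFDerivAt (‖·‖) (‖x‖⁻¹ • innerSL ℝ x) x := by
  have h := (hasStrictFDerivAt_norm_sq x).hasFDerivAt.sqrt (by positivity)
  simp only [Real.sqrt_sq (norm_nonneg _)] at h
  convert h using 1
  rw [← Nat.cast_smul_eq_nsmul ℝ, smul_smul, Nat.cast_ofNat]
  congr 1
  field_simp

theorem HasDerivAt.hasGradientAt_comp_norm [CompleteSpace E] {g : ℝ → ℝ} {g' : ℝ} {x : E}
    (hg : HasDerivAt g g' ‖x‖) (hx : x ≠ 0) :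
    HasGradientAt (fun z => g ‖z‖) ((g' / ‖x‖) • x) x := by
  rw [hasGradientAt_iff_hasFDerivAt]
  refine (hg.comp_hasFDerivAt x (hasFDerivAt_norm hx)).congr_fderiv ?_
  ext y
  simp [div_eq_mul_inv, mul_assoc]

theorem hasGradientAt_neg_sqrt_one_sub_norm [CompleteSpace E] {x : E} (hx₀ : x ≠ 0)
    (hx₁ : ‖x‖ < 1) :
    HasGradientAt (fun z : E => -√(1 - ‖z‖)) ((2 * ‖x‖ * √(1 - ‖x‖))⁻¹ • x) x := by
  have hpos : 0 < 1 - ‖x‖ := by linarith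
  have hg : HasDerivAt (fun t => -√(1 - t)) (2 * √(1 - ‖x‖))⁻¹ ‖x‖ := by
    refine (((hasDerivAt_id ‖x‖).const_sub 1).sqrt hpos.ne').neg.congr_deriv ?_
    simp [neg_div]
  convert hg.hasGradientAt_comp_norm hx₀ using 2
  field_simp

end Radial

theorem integral_pow_mul_one_sub (d : ℕ) :
    ∫ y in (0 : ℝ)..1, y ^ d * (1 - y) = 1 / ((d + 1) * (d + 2)) := by
  simp only [mul_sub, mul_one, ← pow_succ]
  rw [intervalIntegral.integral_sub (intervalIntegral.intervalIntegrable_pow _)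
    (intervalIntegral.intervalIntegrable_pow _), integral_pow, integral_pow]
  push_cast
  field_simp
  ring

theorem setIntegral_ball_one_sub_norm {E : Type*} [NormedAddCommGroup E] [NormedSpace ℝ E]
    [FiniteDimensional ℝ E] [MeasurableSpace E] [BorelSpace E] [Nontrivial E]
    (μ : Measure E) [μ.IsAddHaarMeasure] :
    ∫ x in ball (0 : E) 1, (1 - ‖x‖) ∂μ = μ.real (ball 0 1) / (Module.finrank ℝ E + 1) := by
  obtain ⟨d, hd⟩ : ∃ d, Module.finrank ℝ E = d + 1 :=
    Nat.exists_eq_add_one.mpr Module.finrank_pos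
  have h_radial : ∫ x in ball (0 : E) 1, (1 - ‖x‖) ∂μ =
      ∫ x, (Iio 1).indicator (fun r => 1 - r) ‖x‖ ∂μ := by
    rw [← integral_indicator measurableSet_ball]
    congr with x
    simp [indicator]
  have h_polar : ∫ y in Ioi (0 : ℝ), y ^ d • (Iio 1).indicator (fun r => 1 - r) y =
      ∫ y in (0 : ℝ)..1, y ^ d * (1 - y) := by
    rw [← indicator_smul (Iio 1) (· ^ d), setIntegral_indicator measurableSet_Iio, Ioi_inter_Iio,
      ← integral_Ioc_eq_integral_Ioo, intervalIntegral.integral_of_le zero_le_one]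
    simp only [smul_eq_mul]
  rw [h_radial, integral_fun_norm_addHaar, hd, Nat.add_sub_cancel, h_polar,
    integral_pow_mul_one_sub]
  simp only [nsmul_eq_mul, smul_eq_mul]
  push_cast
  field_simp
  ring

theorem F1Star_smul_self {n : ℕ} (x : EuclideanSpace ℝ (Fin n)) {c : ℝ} (hc : 0 ≤ c) :
    F1Star n x (c • x) = c * ‖x‖ * (1 - ‖x‖) := by
  rw [F1Star, norm_smul, real_inner_smul_right, real_inner_self_eq_norm_sq, Real.norm_of_nonneg hc]
  ring

theorem F1Star_sq_gradient {n : ℕ} {x : EuclideanSpace ℝ (Fin n)} (hx₀ : x ≠ 0) (hx₁ : ‖x‖ < 1) :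
    F1Star n x ((2 * ‖x‖ * √(1 - ‖x‖))⁻¹ • x) ^ 2 = (1 - ‖x‖) / 4 := by
  have hpos : 0 < 1 - ‖x‖ := by linarith
  have hx : 0 < ‖x‖ := norm_pos_iff.mpr hx₀
  rw [F1Star_smul_self x (by positivity)]
  field_simp
  rw [Real.sq_sqrt hpos.le]
  ring

theorem stmt_10 (n : ℕ) (hn : 2 ≤ n) :
    (∀ x : EuclideanSpace ℝ (Fin n), x ∈ ball (0 : EuclideanSpace ℝ (Fin n)) 1 → x ≠ 0 →
      HasGradientAt (fun z : EuclideanSpace ℝ (Fin n) => -Real.sqrt (1 - ‖z‖))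
        ((2 * ‖x‖ * Real.sqrt (1 - ‖x‖))⁻¹ • x) x) ∧
    (∫ x in ball (0 : EuclideanSpace ℝ (Fin n)) 1,
        (F1Star n x ((2 * ‖x‖ * Real.sqrt (1 - ‖x‖))⁻¹ • x)) ^ 2) =
      (1 / 4) * ∫ x in ball (0 : EuclideanSpace ℝ (Fin n)) 1, (1 - ‖x‖) ∧
    (∫ x in ball (0 : EuclideanSpace ℝ (Fin n)) 1,
        (F1Star n x ((2 * ‖x‖ * Real.sqrt (1 - ‖x‖))⁻¹ • x)) ^ 2) =
      (volume (ball (0 : EuclideanSpace ℝ (Fin n)) 1)).toReal / (4 * (n + 1)) ∧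
    (∫ x in ball (0 : EuclideanSpace ℝ (Fin n)) 1, (-Real.sqrt (1 - ‖x‖)) ^ 2) =
      (volume (ball (0 : EuclideanSpace ℝ (Fin n)) 1)).toReal / (n + 1) := by
  have : NeZero n := ⟨by omega⟩
  have h_ball := setIntegral_ball_one_sub_norm (volume : Measure (EuclideanSpace ℝ (Fin n)))
  rw [finrank_euclideanSpace_fin, measureReal_def] at h_ball
  have h_funk : (∫ x in ball (0 : EuclideanSpace ℝ (Fin n)) 1,
      (F1Star n x ((2 * ‖x‖ * Real.sqrt (1 - ‖x‖))⁻¹ • x)) ^ 2) =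
      (1 / 4) * ∫ x in ball (0 : EuclideanSpace ℝ (Fin n)) 1, (1 - ‖x‖) := by
    rw [← integral_const_mul]
    refine setIntegral_congr_ae measurableSet_ball ?_
    filter_upwards [volume.ae_ne 0] with x hx₀ hx
    rw [F1Star_sq_gradient hx₀ (mem_ball_zero_iff.mp hx)]
    ring
  refine ⟨fun x hx hx₀ => hasGradientAt_neg_sqrt_one_sub_norm hx₀ (mem_ball_zero_iff.mp hx),
    h_funk, ?_, ?_⟩
  · rw [h_funk, h_ball]
    field_simp
  · rw [← h_ball]
    refine setIntegral_congr_fun measurableSet_ball fun x hx => ?_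
    rw [neg_sq, Real.sq_sqrt (by linarith [mem_ball_zero_iff.mp hx])]
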